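/- arXiv:1503.03761 — 2 statements merged into one kernel-verified Lean document; each statement's English description precedes it below -/
import Mathlib

section
/- The L² inner product of two B-form polynomials of degree d over a triangle T satisfies ∫_T p q dx dy = (A_T / (C(2d,d) C(2d+2,2))) Σ_{i+j+k=d} Σ_{ν+μ+κ=d} C(i+ν,i) C(j+μ,j) C(k+κ,k) c_{ijk} c̃_{νμκ}, where p = Σ c_{ijk} B^{T,d}_{ijk} and q = Σ c̃_{νμκ} B^{T,d}_{νμκ}. -/
open Finset MeasureTheory

noncomputable abbrev E2 := EuclideanSpace ℝ (Fin 2)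

noncomputable def bern (b1 b2 b3 : E2 → ℝ) (d i j k : ℕ) (v : E2) : ℝ :=
  ((Nat.factorial d : ℝ) / (Nat.factorial i * Nat.factorial j * Nat.factorial k)) *
    b1 v ^ i * b2 v ^ j * b3 v ^ k

def IsBary (v1 v2 v3 : E2) (b1 b2 b3 : E2 → ℝ) : Prop :=
  ∀ v : E2, b1 v + b2 v + b3 v = 1 ∧
    v = b1 v • v1 + b2 v • v2 + b3 v • v3


open Set intervalIntegral

theorem beta_nat (b a : ℕ) : ∫ x in (0:ℝ)..1, x^a * (1-x)^b
    = (Nat.factorial a * Nat.factorial b : ℝ) / (Nat.factorial (a+b+1)) := by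
  induction b generalizing a with
  | zero =>
    have h : ∫ x in (0:ℝ)..1, x^a * (1-x)^0 = ((a:ℝ)+1)⁻¹ := by simp [integral_pow]
    rw [h]
    rw [show a + 0 + 1 = a + 1 by ring, Nat.factorial_succ]
    have : (Nat.factorial a : ℝ) ≠ 0 := by positivity
    field_simp
    simp [Nat.factorial_zero]
  | succ b ih =>
    have key : ∀ x : ℝ, HasDerivAt (fun x : ℝ => x^(a+1) * (1-x)^(b+1))
        (((a:ℝ)+1) * (x^a * (1-x)^(b+1)) - ((b:ℝ)+1) * (x^(a+1) * (1-x)^b)) x := by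
      intro x
      have h1 : HasDerivAt (fun x : ℝ => (1-x)^(b+1)) (-(((b:ℝ)+1) * (1-x)^b)) x := by
        have := ((hasDerivAt_pow (b+1) (1-x)).comp x
          ((hasDerivAt_const x (1:ℝ)).sub (hasDerivAt_id x)))
        simpa [Function.comp_def] using this
      have h2 := (hasDerivAt_pow (a+1) x).mul h1
      refine h2.congr_deriv ?_
      push_cast; ring
    have hint : ∫ x in (0:ℝ)..1,
        (((a:ℝ)+1) * (x^a * (1-x)^(b+1)) - ((b:ℝ)+1) * (x^(a+1) * (1-x)^b)) = 0 := by
      rw [integral_eq_sub_of_hasDerivAt (fun x _ => key x)]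
      · simp
      · apply Continuous.intervalIntegrable; continuity
    rw [intervalIntegral.integral_sub, intervalIntegral.integral_const_mul,
        intervalIntegral.integral_const_mul, ih] at hint
    · have ha : (a:ℝ)+1 ≠ 0 := by positivity
      have hI : (∫ x in (0:ℝ)..1, x^a * (1-x)^(b+1))
          = ((b:ℝ)+1) * ((Nat.factorial (a+1) * Nat.factorial b : ℝ) / (Nat.factorial (a+1+b+1))) / ((a:ℝ)+1) := by
        field_simp at hint ⊢
        linarith
      rw [hI]
      rw [show a+1+b+1 = a+(b+1)+1 by ring, Nat.factorial_succ a, Nat.factorial_succ b]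
      have h1 : (Nat.factorial a : ℝ) ≠ 0 := by positivity
      have h2 : (Nat.factorial (a+(b+1)+1) : ℝ) ≠ 0 := by positivity
      field_simp
      push_cast; ring
    · apply Continuous.intervalIntegrable; continuity
    · apply Continuous.intervalIntegrable; continuity

theorem beta_scaled (a b : ℕ) (c : ℝ) :
    ∫ y in (0:ℝ)..c, y^a * (c-y)^b
      = c^(a+b+1) * ((Nat.factorial a * Nat.factorial b : ℝ) / (Nat.factorial (a+b+1))) := by
  have h := intervalIntegral.smul_integral_comp_mul_left (a := 0) (b := 1)
    (fun y : ℝ => y^a * (c-y)^b) c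
  simp only [mul_zero, mul_one] at h
  rw [← h, ← beta_nat b a, ← intervalIntegral.integral_smul, ← intervalIntegral.integral_const_mul]
  congr 1
  funext x
  simp only [smul_eq_mul]
  rw [mul_pow, show c - c*x = c * (1-x) by ring, mul_pow, pow_add, pow_add]
  ring

def Simp2 : Set (ℝ × ℝ) := {p | 0 ≤ p.1 ∧ 0 ≤ p.2 ∧ p.1 + p.2 ≤ 1}

theorem simp2_closed : IsClosed Simp2 := by
  have : Simp2 = {p : ℝ×ℝ | 0 ≤ p.1} ∩ ({p | 0 ≤ p.2} ∩ {p | p.1 + p.2 ≤ 1}) := rfl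
  rw [this]
  exact (isClosed_le continuous_const continuous_fst).inter
    ((isClosed_le continuous_const continuous_snd).inter
      (isClosed_le (continuous_fst.add continuous_snd) continuous_const))

theorem simp2_compact : IsCompact Simp2 := by
  apply IsCompact.of_isClosed_subset (isCompact_Icc (a := ((0:ℝ),(0:ℝ))) (b := (1,1))) simp2_closed
  rintro ⟨x,y⟩ ⟨h1,h2,h3⟩
  constructor <;> constructor <;> simp_all <;> linarith

theorem simplex_integral (α β γ : ℕ) :
    ∫ p in Simp2, p.1^β * p.2^γ * (1-p.1-p.2)^α
      = (Nat.factorial α * Nat.factorial β * Nat.factorial γ : ℝ)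
          / (Nat.factorial (α+β+γ+2)) := by
  set g : ℝ×ℝ → ℝ := fun p => p.1^β * p.2^γ * (1-p.1-p.2)^α with hg
  have hgc : Continuous g := by fun_prop
  have hms : MeasurableSet Simp2 := simp2_closed.measurableSet
  have hint : Integrable (Simp2.indicator g) := by
    rw [integrable_indicator_iff hms]
    exact hgc.continuousOn.integrableOn_compact simp2_compact
  rw [← MeasureTheory.integral_indicator hms]
  rw [MeasureTheory.Measure.volume_eq_prod] at hint ⊢
  rw [MeasureTheory.integral_prod _ hint]
  -- inner integral computation
  have hinner : ∀ x : ℝ, (∫ y : ℝ, Simp2.indicator g (x, y))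
      = (Set.Icc (0:ℝ) 1).indicator
          (fun x => x^β * (1-x)^(α+γ+1) *
            ((Nat.factorial γ * Nat.factorial α : ℝ) / (Nat.factorial (γ+α+1)))) x := by
    intro x
    by_cases hx : x ∈ Set.Icc (0:ℝ) 1
    · obtain ⟨hx0, hx1⟩ := hx
      have hsec : ∀ y : ℝ, Simp2.indicator g (x, y)
          = (Set.Icc (0:ℝ) (1-x)).indicator (fun y => g (x, y)) y := by
        intro y
        by_cases hy : 0 ≤ y ∧ y ≤ 1 - x
        · rw [indicator_of_mem (show (x,y) ∈ Simp2 from ⟨hx0, hy.1, by linarith [hy.2]⟩),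
            indicator_of_mem (Set.mem_Icc.mpr hy)]
        · rw [indicator_of_notMem (show (x,y) ∉ Simp2 by
              rintro ⟨h1, h2, h3⟩; exact hy ⟨h2, by linarith⟩),
            indicator_of_notMem (fun h => hy (Set.mem_Icc.mp h))]
      rw [indicator_of_mem (Set.mem_Icc.mpr ⟨hx0, hx1⟩)]
      simp_rw [hsec]
      rw [MeasureTheory.integral_indicator measurableSet_Icc,
        MeasureTheory.integral_Icc_eq_integral_Ioc,
        ← intervalIntegral.integral_of_le (by linarith : (0:ℝ) ≤ 1 - x)]
      have : ∀ y : ℝ, g (x, y) = x^β * (y^γ * ((1-x) - y)^α) := by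
        intro y; simp only [hg]; ring_nf
      simp_rw [this]
      rw [intervalIntegral.integral_const_mul, beta_scaled]
      ring
    · rw [indicator_of_notMem hx]
      have hsec : ∀ y : ℝ, Simp2.indicator g (x, y) = 0 := by
        intro y
        apply indicator_of_notMem
        rintro (⟨h1, h2, h3⟩ : (x,y) ∈ Simp2)
        simp only [Set.mem_Icc, not_and_or, not_le] at hx
        rcases hx with h | h
        · linarith
        · linarith
      simp_rw [hsec]
      simp
  simp_rw [hinner]
  rw [MeasureTheory.integral_indicator measurableSet_Icc,
    MeasureTheory.integral_Icc_eq_integral_Ioc,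
    ← intervalIntegral.integral_of_le (by norm_num : (0:ℝ) ≤ 1)]
  rw [intervalIntegral.integral_mul_const, beta_nat]
  have h1 : (Nat.factorial (γ+α+1) : ℝ) ≠ 0 := by positivity
  have h2 : (Nat.factorial (β+(α+γ+1)+1) : ℝ) ≠ 0 := by positivity
  have h3 : (Nat.factorial (α+β+γ+2) : ℝ) ≠ 0 := by positivity
  rw [show β+(α+γ+1)+1 = α+β+γ+2 by ring, show γ+α+1 = α+γ+1 by ring] at *
  field_simp

section CV
variable (v1 v2 v3 : E2)

/-- linear independence of the edge vectors -/
theorem linIndep_edges (hnd : AffineIndependent ℝ ![v1, v2, v3]) :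
    ∀ r1 r2 : ℝ, r1 • (v2 - v1) + r2 • (v3 - v1) = 0 → r1 = 0 ∧ r2 = 0 := by
  intro r1 r2 hr
  rw [affineIndependent_iff] at hnd
  have hsum : ∑ i : Fin 3, (![-(r1+r2), r1, r2]) i = 0 := by
    simp [Fin.sum_univ_three]
  have hvs : ∑ i : Fin 3, (![-(r1+r2), r1, r2]) i • (![v1,v2,v3]) i = (0 : E2) := by
    simp only [Fin.sum_univ_three]
    rw [show (0:E2) = r1 • (v2 - v1) + r2 • (v3 - v1) from hr.symm]
    show (-(r1+r2)) • v1 + r1 • v2 + r2 • v3 = _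
    module
  have := hnd Finset.univ ![-(r1+r2), r1, r2] hsum hvs
  exact ⟨this 1 (Finset.mem_univ _), this 2 (Finset.mem_univ _)⟩

theorem bary_unique (hnd : AffineIndependent ℝ ![v1, v2, v3])
    (a1 a2 a3 c1 c2 c3 : ℝ) (ha : a1 + a2 + a3 = 1) (hc : c1 + c2 + c3 = 1)
    (h : a1 • v1 + a2 • v2 + a3 • v3 = c1 • v1 + c2 • v2 + c3 • v3) :
    a1 = c1 ∧ a2 = c2 ∧ a3 = c3 := by
  have key : (a2 - c2) • (v2 - v1) + (a3 - c3) • (v3 - v1) = 0 := by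
    have h1 : a1 = 1 - a2 - a3 := by linarith
    have h2 : c1 = 1 - c2 - c3 := by linarith
    subst h1 h2
    have := h
    rw [show (1 - a2 - a3) • v1 + a2 • v2 + a3 • v3 = v1 + (a2 • (v2 - v1) + a3 • (v3 - v1)) by module] at this
    rw [show (1 - c2 - c3) • v1 + c2 • v2 + c3 • v3 = v1 + (c2 • (v2 - v1) + c3 • (v3 - v1)) by module] at this
    have := add_left_cancel this
    rw [show (a2 - c2) • (v2 - v1) + (a3 - c3) • (v3 - v1)
        = (a2 • (v2 - v1) + a3 • (v3 - v1)) - (c2 • (v2 - v1) + c3 • (v3 - v1)) by module, this]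
    simp
  obtain ⟨e1, e2⟩ := linIndep_edges v1 v2 v3 hnd _ _ key
  refine ⟨by linarith, by linarith, by linarith⟩

end CV

noncomputable def Mlin (v1 v2 v3 : E2) : E2 →ₗ[ℝ] E2 where
  toFun u := u 0 • (v2 - v1) + u 1 • (v3 - v1)
  map_add' u v := by
    show (u + v) 0 • _ + (u + v) 1 • _ = _
    rw [PiLp.add_apply, PiLp.add_apply]; module
  map_smul' c u := by
    show (c • u) 0 • _ + (c • u) 1 • _ = _
    rw [PiLp.smul_apply, PiLp.smul_apply]
    simp only [RingHom.id_apply, smul_eq_mul]; module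

def SimpE : Set E2 := {u | 0 ≤ u 0 ∧ 0 ≤ u 1 ∧ u 0 + u 1 ≤ 1}

theorem simpE_closed : IsClosed SimpE := by
  have h0 : Continuous (fun u : E2 => u 0) := (EuclideanSpace.proj (0 : Fin 2)).continuous
  have h1 : Continuous (fun u : E2 => u 1) := (EuclideanSpace.proj (1 : Fin 2)).continuous
  have : SimpE = {u : E2 | 0 ≤ u 0} ∩ ({u | 0 ≤ u 1} ∩ {u | u 0 + u 1 ≤ 1}) := rfl
  rw [this]
  exact (isClosed_le continuous_const h0).inter
    ((isClosed_le continuous_const h1).inter (isClosed_le (h0.add h1) continuous_const))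

section Tri
variable (v1 v2 v3 : E2)

noncomputable def psi : E2 → E2 := fun u => v1 + Mlin v1 v2 v3 u

theorem psi_eq (u : E2) :
    psi v1 v2 v3 u = (1 - u 0 - u 1) • v1 + u 0 • v2 + u 1 • v3 := by
  show v1 + (u 0 • (v2 - v1) + u 1 • (v3 - v1)) = _
  module

theorem simpE_convex : Convex ℝ SimpE := by
  intro x hx y hy a b ha hb hab
  obtain ⟨hx0, hx1, hx2⟩ := hx
  obtain ⟨hy0, hy1, hy2⟩ := hy
  have e0 : (a • x + b • y) 0 = a * x 0 + b * y 0 := by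
    rw [PiLp.add_apply, PiLp.smul_apply, PiLp.smul_apply]; rfl
  have e1 : (a • x + b • y) 1 = a * x 1 + b * y 1 := by
    rw [PiLp.add_apply, PiLp.smul_apply, PiLp.smul_apply]; rfl
  refine ⟨?_, ?_, ?_⟩
  · rw [e0]; positivity
  · rw [e1]; positivity
  · rw [e0, e1]; nlinarith

theorem tri_eq_image :
    convexHull ℝ ({v1, v2, v3} : Set E2) = psi v1 v2 v3 '' SimpE := by
  have hmem : ∀ x y : ℝ, 0 ≤ x → 0 ≤ y → x + y ≤ 1 →
      ((EuclideanSpace.equiv (Fin 2) ℝ).symm ![x,y]) ∈ SimpE ∧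
      ((EuclideanSpace.equiv (Fin 2) ℝ).symm ![x,y]) 0 = x ∧
      ((EuclideanSpace.equiv (Fin 2) ℝ).symm ![x,y]) 1 = y := by
    intro x y hx hy hxy
    exact ⟨⟨by simpa using hx, by simpa using hy, by simpa using hxy⟩, rfl, rfl⟩
  apply le_antisymm
  · apply convexHull_min
    · rintro v (rfl | rfl | rfl)
      · obtain ⟨hm, h0, h1⟩ := hmem 0 0 le_rfl le_rfl (by norm_num)
        exact ⟨_, hm, by rw [psi_eq, h0, h1]; module⟩
      · obtain ⟨hm, h0, h1⟩ := hmem 1 0 zero_le_one le_rfl (by norm_num)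
        exact ⟨_, hm, by rw [psi_eq, h0, h1]; module⟩
      · obtain ⟨hm, h0, h1⟩ := hmem 0 1 le_rfl zero_le_one (by norm_num)
        exact ⟨_, hm, by rw [psi_eq, h0, h1]; module⟩
    · have hA : psi v1 v2 v3 '' SimpE
          = (AffineMap.mk' (psi v1 v2 v3) (Mlin v1 v2 v3) 0
              (by intro p; show psi v1 v2 v3 p = Mlin v1 v2 v3 (p - 0) + psi v1 v2 v3 0;
                  simp [psi]; abel)) '' SimpE := by
        rfl
      rw [hA]
      exact (simpE_convex).affine_image _
  · rintro _ ⟨u, ⟨hu0, hu1, hu2⟩, rfl⟩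
    rw [psi_eq]
    have := Finset.centerMass_mem_convexHull (Finset.univ : Finset (Fin 3))
      (w := ![1 - u 0 - u 1, u 0, u 1]) (z := ![v1, v2, v3])
      (s := ({v1, v2, v3} : Set E2))
      (by intro i _; fin_cases i <;> simp <;> linarith)
      (by simp [Fin.sum_univ_three]; linarith)
      (by intro i _; fin_cases i <;> simp [Set.mem_insert_iff])
    rwa [Finset.centerMass_eq_of_sum_1 _ _ (by simp [Fin.sum_univ_three]; ring),
      Fin.sum_univ_three] at this

end Tri

section Core
variable (v1 v2 v3 : E2) (hnd : AffineIndependent ℝ ![v1, v2, v3])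

theorem psi_injOn (hnd : AffineIndependent ℝ ![v1, v2, v3]) :
    Set.InjOn (psi v1 v2 v3) SimpE := by
  intro u _ u' _ h
  have hM : Mlin v1 v2 v3 (u - u') = 0 := by
    rw [map_sub, sub_eq_zero]
    exact add_left_cancel h
  have h2 : (u - u') 0 • (v2 - v1) + (u - u') 1 • (v3 - v1) = 0 := hM
  obtain ⟨e0, e1⟩ := linIndep_edges v1 v2 v3 hnd _ _ h2
  rw [PiLp.sub_apply, sub_eq_zero] at e0 e1
  ext i
  fin_cases i
  · exact e0
  · exact e1

theorem cv (hnd : AffineIndependent ℝ ![v1, v2, v3]) (g : E2 → ℝ) :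
    ∫ v in convexHull ℝ ({v1, v2, v3} : Set E2), g v
      = |LinearMap.det (Mlin v1 v2 v3)|
          * ∫ u in SimpE, g (psi v1 v2 v3 u) := by
  rw [tri_eq_image]
  rw [MeasureTheory.integral_image_eq_integral_abs_det_fderiv_smul volume
    simpE_closed.measurableSet
    (f := psi v1 v2 v3)
    (f' := fun _ => (Mlin v1 v2 v3).toContinuousLinearMap)
    (fun x _ => (((Mlin v1 v2 v3).toContinuousLinearMap.hasFDerivAt (x := x)).const_add
      v1).hasFDerivWithinAt)
    (psi_injOn v1 v2 v3 hnd) g]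
  simp_rw [smul_eq_mul]
  rw [MeasureTheory.integral_const_mul]
  rfl

theorem simpE_to_simp2 (f : ℝ → ℝ → ℝ) :
    ∫ u in SimpE, f (u 0) (u 1) = ∫ p in Simp2, f p.1 p.2 := by
  have hm : MeasurePreserving
      ((MeasurableEquiv.toLp 2 (Fin 2 → ℝ)).symm.trans (MeasurableEquiv.finTwoArrow)) :=
    (MeasureTheory.volume_preserving_finTwoArrow ℝ).comp
      (EuclideanSpace.volume_preserving_symm_measurableEquiv_toLp (Fin 2))
  have := hm.setIntegral_preimage_emb
    ((MeasurableEquiv.toLp 2 (Fin 2 → ℝ)).symm.trans (MeasurableEquiv.finTwoArrow)).measurableEmbedding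
    (fun p => f p.1 p.2) Simp2
  convert this using 2
  · rfl
  · rfl
  · rfl

end Core

section Core2
variable (v1 v2 v3 : E2) (b1 b2 b3 : E2 → ℝ)

theorem bpsi (hnd : AffineIndependent ℝ ![v1, v2, v3]) (hb : IsBary v1 v2 v3 b1 b2 b3)
    (u : E2) : b1 (psi v1 v2 v3 u) = 1 - u 0 - u 1 ∧ b2 (psi v1 v2 v3 u) = u 0
      ∧ b3 (psi v1 v2 v3 u) = u 1 := by
  obtain ⟨hs, hv⟩ := hb (psi v1 v2 v3 u)
  exact bary_unique v1 v2 v3 hnd _ _ _ _ _ _ hs (by ring) (hv.symm.trans (psi_eq v1 v2 v3 u))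

theorem vol_tri (hnd : AffineIndependent ℝ ![v1, v2, v3]) :
    (volume (convexHull ℝ ({v1, v2, v3} : Set E2))).toReal
      = |LinearMap.det (Mlin v1 v2 v3)| / 2 := by
  have h1 : ∫ v in convexHull ℝ ({v1, v2, v3} : Set E2), (1:ℝ)
      = (volume (convexHull ℝ ({v1, v2, v3} : Set E2))).toReal := by
    rw [MeasureTheory.setIntegral_const]; simp [Measure.real]
  rw [← h1, cv v1 v2 v3 hnd]
  have h2 : ∫ u in SimpE, (1:ℝ) = ∫ p in Simp2, (fun x y : ℝ => (1:ℝ)) p.1 p.2 :=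
    simpE_to_simp2 (fun _ _ => 1)
  rw [h2]
  have h3 := simplex_integral 0 0 0
  simp only [pow_zero, mul_one, one_mul] at h3
  rw [h3]
  norm_num [Nat.factorial]
  ring

theorem core_integral (hnd : AffineIndependent ℝ ![v1, v2, v3])
    (hb : IsBary v1 v2 v3 b1 b2 b3) (α β γ : ℕ) :
    ∫ v in convexHull ℝ ({v1, v2, v3} : Set E2), (b1 v)^α * (b2 v)^β * (b3 v)^γ
      = 2 * (volume (convexHull ℝ ({v1, v2, v3} : Set E2))).toReal
          * ((Nat.factorial α * Nat.factorial β * Nat.factorial γ : ℝ)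
              / (Nat.factorial (α+β+γ+2))) := by
  rw [cv v1 v2 v3 hnd, vol_tri v1 v2 v3 hnd]
  have h1 : (fun u : E2 => (b1 (psi v1 v2 v3 u))^α * (b2 (psi v1 v2 v3 u))^β
      * (b3 (psi v1 v2 v3 u))^γ)
      = fun u : E2 => (fun x y : ℝ => x^β * y^γ * (1-x-y)^α) (u 0) (u 1) := by
    funext u
    obtain ⟨e1, e2, e3⟩ := bpsi v1 v2 v3 b1 b2 b3 hnd hb u
    simp only [e1, e2, e3]
    ring
  rw [show (∫ u in SimpE, (b1 (psi v1 v2 v3 u))^α * (b2 (psi v1 v2 v3 u))^β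
      * (b3 (psi v1 v2 v3 u))^γ)
    = ∫ u in SimpE, (fun x y : ℝ => x^β * y^γ * (1-x-y)^α) (u 0) (u 1) by rw [h1]]
  rw [simpE_to_simp2 (fun x y => x^β * y^γ * (1-x-y)^α)]
  rw [simplex_integral]
  ring

theorem b_continuous (hnd : AffineIndependent ℝ ![v1, v2, v3])
    (hb : IsBary v1 v2 v3 b1 b2 b3) :
    Continuous b1 ∧ Continuous b2 ∧ Continuous b3 := by
  have hinj : Function.Injective (Mlin v1 v2 v3) := by
    intro u u' h
    have h2 : (u - u') 0 • (v2 - v1) + (u - u') 1 • (v3 - v1) = 0 := by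
      show Mlin v1 v2 v3 (u - u') = 0
      rw [map_sub, sub_eq_zero]; exact h
    obtain ⟨e0, e1⟩ := linIndep_edges v1 v2 v3 hnd _ _ h2
    rw [PiLp.sub_apply, sub_eq_zero] at e0 e1
    ext i; fin_cases i
    · exact e0
    · exact e1
  have hbij : Function.Bijective (Mlin v1 v2 v3) :=
    ⟨hinj, (LinearMap.injective_iff_surjective).mp hinj⟩
  set Eq := LinearEquiv.ofBijective (Mlin v1 v2 v3) hbij with hEq
  have hval : ∀ v : E2, b2 v = (Eq.symm (v - v1)) 0 ∧ b3 v = (Eq.symm (v - v1)) 1 := by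
    intro v
    have hpsi : psi v1 v2 v3 (Eq.symm (v - v1)) = v := by
      show v1 + Mlin v1 v2 v3 (Eq.symm (v - v1)) = v
      have : Mlin v1 v2 v3 (Eq.symm (v - v1)) = v - v1 := Eq.apply_symm_apply (v - v1)
      rw [this]; abel
    obtain ⟨e1, e2, e3⟩ := bpsi v1 v2 v3 b1 b2 b3 hnd hb (Eq.symm (v - v1))
    rw [hpsi] at e1 e2 e3
    exact ⟨e2, e3⟩
  have hc : Continuous (fun v : E2 => Eq.symm (v - v1)) := by
    have : Continuous (Eq.symm : E2 →ₗ[ℝ] E2).toFun := by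
      exact LinearMap.continuous_of_finiteDimensional _
    exact this.comp (continuous_id.sub continuous_const)
  have hc0 : Continuous (fun v : E2 => (Eq.symm (v - v1)) 0) :=
    ((EuclideanSpace.proj (0 : Fin 2)).continuous).comp hc
  have hc1 : Continuous (fun v : E2 => (Eq.symm (v - v1)) 1) :=
    ((EuclideanSpace.proj (1 : Fin 2)).continuous).comp hc
  have hb2 : Continuous b2 := by
    have : b2 = fun v => (Eq.symm (v - v1)) 0 := funext fun v => (hval v).1
    rw [this]; exact hc0
  have hb3 : Continuous b3 := by
    have : b3 = fun v => (Eq.symm (v - v1)) 1 := funext fun v => (hval v).2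
    rw [this]; exact hc1
  have hb1 : Continuous b1 := by
    have : b1 = fun v => 1 - b2 v - b3 v := by
      funext v; have := (hb v).1; linarith
    rw [this]
    exact (continuous_const.sub hb2).sub hb3
  exact ⟨hb1, hb2, hb3⟩

end Core2

theorem key_id (d i j k ν μ κ : ℕ) (ht : i+j+k = d) (hs : ν+μ+κ = d) (V : ℝ) :
    ((Nat.factorial d : ℝ) / (Nat.factorial i * Nat.factorial j * Nat.factorial k))
      * ((Nat.factorial d : ℝ) / (Nat.factorial ν * Nat.factorial μ * Nat.factorial κ))
      * (2 * V * ((Nat.factorial (i+ν) * Nat.factorial (j+μ) * Nat.factorial (k+κ) : ℝ)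
          / (Nat.factorial ((i+ν)+(j+μ)+(k+κ)+2))))
    = V / ((Nat.choose (2*d) d : ℝ) * (Nat.choose (2*d+2) 2 : ℝ))
        * ((Nat.choose (i+ν) i : ℝ) * (Nat.choose (j+μ) j : ℝ) * (Nat.choose (k+κ) k : ℝ)) := by
  have hsum : (i+ν)+(j+μ)+(k+κ)+2 = 2*d+2 := by omega
  rw [hsum]
  rw [Nat.cast_choose ℝ (Nat.le_add_right i ν), Nat.cast_choose ℝ (Nat.le_add_right j μ),
    Nat.cast_choose ℝ (Nat.le_add_right k κ),
    Nat.cast_choose ℝ (show d ≤ 2*d by omega),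
    Nat.cast_choose ℝ (show 2 ≤ 2*d+2 by omega)]
  rw [Nat.add_sub_cancel_left, Nat.add_sub_cancel_left, Nat.add_sub_cancel_left,
    show 2*d - d = d by omega, show 2*d+2-2 = 2*d by omega]
  have h2d2 : Nat.factorial (2*d+2) = (2*d+2) * (2*d+1) * Nat.factorial (2*d) := by
    rw [show 2*d+2 = (2*d+1)+1 by ring, Nat.factorial_succ, Nat.factorial_succ]
    ring
  rw [h2d2]
  have f0 : ∀ n : ℕ, (Nat.factorial n : ℝ) ≠ 0 := fun n => by positivity
  have c1 : ((2:ℕ)*d+2 : ℝ) ≠ 0 := by positivity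
  field_simp
  ring

/-- The L² inner product of two B-form polynomials of degree `d` over a
triangle `T` satisfies
`∫_T p q = (A_T / (C(2d,d) C(2d+2,2))) ∑∑ C(i+ν,i) C(j+μ,j) C(k+κ,k) c_{ijk} c̃_{νμκ}`. -/
theorem stmt_6 (v1 v2 v3 : E2) (hnd : AffineIndependent ℝ ![v1, v2, v3])
    (b1 b2 b3 : E2 → ℝ) (hb : IsBary v1 v2 v3 b1 b2 b3)
    (d : ℕ) (c ct : (Fin 3 → ℕ) → ℝ) :
    (∫ v in convexHull ℝ ({v1, v2, v3} : Set E2),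
        (∑ t ∈ Finset.Nat.antidiagonalTuple 3 d,
            c t * bern b1 b2 b3 d (t 0) (t 1) (t 2) v) *
        (∑ t ∈ Finset.Nat.antidiagonalTuple 3 d,
            ct t * bern b1 b2 b3 d (t 0) (t 1) (t 2) v))
      = (volume (convexHull ℝ ({v1, v2, v3} : Set E2))).toReal /
            ((Nat.choose (2 * d) d : ℝ) * (Nat.choose (2 * d + 2) 2 : ℝ)) *
          ∑ t ∈ Finset.Nat.antidiagonalTuple 3 d,
            ∑ s ∈ Finset.Nat.antidiagonalTuple 3 d,
              (Nat.choose (t 0 + s 0) (t 0) : ℝ) * (Nat.choose (t 1 + s 1) (t 1) : ℝ) *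
                (Nat.choose (t 2 + s 2) (t 2) : ℝ) * c t * ct s := by
  obtain ⟨hc1, hc2, hc3⟩ := b_continuous v1 v2 v3 b1 b2 b3 hnd hb
  set T := convexHull ℝ ({v1, v2, v3} : Set E2) with hT
  have hTcpt : IsCompact T := (Set.toFinite _).isCompact_convexHull ℝ
  -- integrability of each product term
  have hint : ∀ t s : Fin 3 → ℕ, IntegrableOn
      (fun v => (c t * bern b1 b2 b3 d (t 0) (t 1) (t 2) v)
        * (ct s * bern b1 b2 b3 d (s 0) (s 1) (s 2) v)) T := by
    intro t s
    apply ContinuousOn.integrableOn_compact hTcpt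
    apply Continuous.continuousOn
    unfold bern
    fun_prop
  -- expand the product of sums
  have hexp : ∀ v : E2,
      (∑ t ∈ Finset.Nat.antidiagonalTuple 3 d, c t * bern b1 b2 b3 d (t 0) (t 1) (t 2) v) *
      (∑ t ∈ Finset.Nat.antidiagonalTuple 3 d, ct t * bern b1 b2 b3 d (t 0) (t 1) (t 2) v)
      = ∑ t ∈ Finset.Nat.antidiagonalTuple 3 d, ∑ s ∈ Finset.Nat.antidiagonalTuple 3 d,
          (c t * bern b1 b2 b3 d (t 0) (t 1) (t 2) v)
            * (ct s * bern b1 b2 b3 d (s 0) (s 1) (s 2) v) := by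
    intro v
    rw [Finset.sum_mul_sum]
  simp_rw [hexp]
  rw [MeasureTheory.integral_finset_sum _ (fun t _ =>
    MeasureTheory.integrable_finset_sum _ (fun s _ => hint t s))]
  rw [Finset.mul_sum]
  apply Finset.sum_congr rfl
  intro t htmem
  rw [MeasureTheory.integral_finset_sum _ (fun s _ => hint t s)]
  rw [Finset.mul_sum]
  apply Finset.sum_congr rfl
  intro s hsmem
  have ht : t 0 + t 1 + t 2 = d := by
    have := (Finset.Nat.mem_antidiagonalTuple).mp htmem
    rw [Fin.sum_univ_three] at this
    exact this
  have hs : s 0 + s 1 + s 2 = d := by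
    have := (Finset.Nat.mem_antidiagonalTuple).mp hsmem
    rw [Fin.sum_univ_three] at this
    exact this
  -- rewrite the product as const * power-product
  have hprod : ∀ v : E2,
      (c t * bern b1 b2 b3 d (t 0) (t 1) (t 2) v)
        * (ct s * bern b1 b2 b3 d (s 0) (s 1) (s 2) v)
      = (c t * ct s
          * (((Nat.factorial d : ℝ) / (Nat.factorial (t 0) * Nat.factorial (t 1) * Nat.factorial (t 2)))
          * ((Nat.factorial d : ℝ) / (Nat.factorial (s 0) * Nat.factorial (s 1) * Nat.factorial (s 2)))))
        * ((b1 v)^(t 0 + s 0) * (b2 v)^(t 1 + s 1) * (b3 v)^(t 2 + s 2)) := by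
    intro v
    unfold bern
    rw [pow_add, pow_add, pow_add]
    ring
  simp_rw [hprod]
  rw [MeasureTheory.integral_const_mul]
  rw [core_integral v1 v2 v3 b1 b2 b3 hnd hb]
  rw [← hT]
  rw [show (c t * ct s
      * (((Nat.factorial d : ℝ) / (Nat.factorial (t 0) * Nat.factorial (t 1) * Nat.factorial (t 2)))
      * ((Nat.factorial d : ℝ) / (Nat.factorial (s 0) * Nat.factorial (s 1) * Nat.factorial (s 2)))))
      * (2 * (volume T).toReal * ((Nat.factorial (t 0 + s 0) * Nat.factorial (t 1 + s 1)
          * Nat.factorial (t 2 + s 2) : ℝ)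
          / (Nat.factorial ((t 0 + s 0)+(t 1 + s 1)+(t 2 + s 2)+2))))
    = (c t * ct s) * (((Nat.factorial d : ℝ) / (Nat.factorial (t 0) * Nat.factorial (t 1) * Nat.factorial (t 2)))
      * ((Nat.factorial d : ℝ) / (Nat.factorial (s 0) * Nat.factorial (s 1) * Nat.factorial (s 2)))
      * (2 * (volume T).toReal * ((Nat.factorial (t 0 + s 0) * Nat.factorial (t 1 + s 1)
          * Nat.factorial (t 2 + s 2) : ℝ)
          / (Nat.factorial ((t 0 + s 0)+(t 1 + s 1)+(t 2 + s 2)+2))))) by ring]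
  rw [key_id d (t 0) (t 1) (t 2) (s 0) (s 1) (s 2) ht hs]
  ring
end

section
/- Bernstein–Bézier approximation error bound: for a twice continuously differentiable function F on a triangle T, the Bernstein operator B_d(F) = Σ_{ξ ∈ D_{d,T}} F(ξ) B_ξ satisfies ‖F − B_d(F)‖_{∞,T} ≤ (|T|²/d) |F|_{2,T}, where |T| is the diameter (longest edge length) of T and |F|_{2,T} is the maximum over T of the second-order derivative seminorm. -/
open Finset

open scoped RealInnerProductSpace

noncomputable def mlt (d : ℕ) (t : Fin 3 → ℕ) : ℝ :=
  (Nat.factorial d : ℝ) /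
    ((Nat.factorial (t 0) : ℝ) * (Nat.factorial (t 1) : ℝ) * (Nat.factorial (t 2) : ℝ))

noncomputable def pw (b : Fin 3 → ℝ) (t : Fin 3 → ℕ) : ℝ := b 0 ^ t 0 * b 1 ^ t 1 * b 2 ^ t 2

lemma sum3_of_mem {d : ℕ} {t : Fin 3 → ℕ} (h : t ∈ Finset.Nat.antidiagonalTuple 3 d) :
    t 0 + t 1 + t 2 = d := by
  rw [Finset.Nat.mem_antidiagonalTuple] at h
  simpa [Fin.sum_univ_three] using h

lemma shift (b : Fin 3 → ℝ) (d : ℕ) (m : Fin 3) (g : (Fin 3 → ℕ) → ℝ) :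
    ∑ t ∈ Finset.Nat.antidiagonalTuple 3 (d+1), (t m : ℝ) * mlt (d+1) t * pw b t * g t
    = ((d:ℝ)+1) * b m * ∑ s ∈ Finset.Nat.antidiagonalTuple 3 d,
        mlt d s * pw b s * g (Function.update s m (s m + 1)) := by
  classical
  have himg : (Finset.Nat.antidiagonalTuple 3 d).image
      (fun s => Function.update s m (s m + 1)) ⊆ Finset.Nat.antidiagonalTuple 3 (d+1) := by
    intro x hx
    rcases Finset.mem_image.1 hx with ⟨s, hs, rfl⟩
    rw [Finset.Nat.mem_antidiagonalTuple] at hs ⊢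
    rw [Finset.sum_update_of_mem (Finset.mem_univ m)]
    rw [Finset.sum_eq_add_sum_sdiff_singleton_of_mem (Finset.mem_univ m)] at hs
    omega
  have hzero : ∀ x ∈ Finset.Nat.antidiagonalTuple 3 (d+1),
      x ∉ (Finset.Nat.antidiagonalTuple 3 d).image (fun s => Function.update s m (s m + 1)) →
      (x m : ℝ) * mlt (d+1) x * pw b x * g x = 0 := by
    intro x hx hnx
    rcases Nat.eq_zero_or_pos (x m) with h0 | h0
    · simp [h0]
    · exfalso
      apply hnx
      refine Finset.mem_image.2 ⟨Function.update x m (x m - 1), ?_, ?_⟩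
      · rw [Finset.Nat.mem_antidiagonalTuple] at hx ⊢
        rw [Finset.sum_update_of_mem (Finset.mem_univ m)]
        rw [Finset.sum_eq_add_sum_sdiff_singleton_of_mem (Finset.mem_univ m)] at hx
        omega
      · simp only [Function.update_self, Function.update_idem]
        have : x m - 1 + 1 = x m := by omega
        rw [this, Function.update_eq_self]
  have hinj : ∀ a ∈ Finset.Nat.antidiagonalTuple 3 d, ∀ b ∈ Finset.Nat.antidiagonalTuple 3 d,
      Function.update a m (a m + 1) = Function.update b m (b m + 1) → a = b := by
    intro a _ c _ h
    funext i
    by_cases hi : i = m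
    · subst hi
      have := congrFun h i
      simpa using this
    · have := congrFun h i
      simpa [Function.update_of_ne hi] using this
  rw [← Finset.sum_subset himg hzero, Finset.sum_image hinj, Finset.mul_sum]
  apply Finset.sum_congr rfl
  intro s hs
  have hA : ((Function.update s m (s m + 1)) m : ℝ) = (s m : ℝ) + 1 := by
    simp
  have hC : pw b (Function.update s m (s m + 1)) = b m * pw b s := by
    fin_cases m <;>
      simp [pw, Function.update, pow_succ] <;> ring
  have hB : mlt (d+1) (Function.update s m (s m + 1)) * ((s m : ℝ) + 1) = ((d:ℝ)+1) * mlt d s := by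
    have hfac : ∀ k : ℕ, ((Nat.factorial k : ℝ)) ≠ 0 := fun k => by
      exact_mod_cast (Nat.factorial_pos k).ne'
    fin_cases m <;>
      · simp only [mlt]
        simp [Function.update, Nat.factorial_succ]
        push_cast
        field_simp
  calc (((Function.update s m (s m + 1)) m : ℝ)) * mlt (d+1) (Function.update s m (s m+1)) *
        pw b (Function.update s m (s m+1)) * g (Function.update s m (s m+1))
      = (mlt (d+1) (Function.update s m (s m + 1)) * ((s m : ℝ) + 1)) *
        (b m * pw b s) * g (Function.update s m (s m+1)) := by rw [hA, hC]; ring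
    _ = ((d:ℝ)+1) * b m * (mlt d s * pw b s * g (Function.update s m (s m + 1))) := by
        rw [hB]; ring

lemma M0 (b : Fin 3 → ℝ) (hb : b 0 + b 1 + b 2 = 1) :
    ∀ d : ℕ, ∑ t ∈ Finset.Nat.antidiagonalTuple 3 d, mlt d t * pw b t = 1 := by
  intro d
  induction d with
  | zero => simp [Finset.Nat.antidiagonalTuple_zero_right, mlt, pw]
  | succ d ih =>
    have hd1 : ((d:ℝ)+1) ≠ 0 := by positivity
    apply mul_left_cancel₀ hd1
    have h0 := shift b d 0 (fun _ => 1)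
    have h1 := shift b d 1 (fun _ => 1)
    have h2 := shift b d 2 (fun _ => 1)
    simp only [mul_one] at h0 h1 h2
    calc ((d:ℝ)+1) * ∑ t ∈ Finset.Nat.antidiagonalTuple 3 (d+1), mlt (d+1) t * pw b t
        = ∑ t ∈ Finset.Nat.antidiagonalTuple 3 (d+1),
            ((t 0 : ℝ) * mlt (d+1) t * pw b t + (t 1 : ℝ) * mlt (d+1) t * pw b t
              + (t 2 : ℝ) * mlt (d+1) t * pw b t) := by
          rw [Finset.mul_sum]
          apply Finset.sum_congr rfl
          intro t ht
          have h3 : ((t 0 : ℝ) + (t 1 : ℝ) + (t 2 : ℝ)) = (d:ℝ)+1 := by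
            exact_mod_cast congrArg (Nat.cast : ℕ → ℝ) (sum3_of_mem ht)
          calc ((d:ℝ)+1) * (mlt (d+1) t * pw b t)
              = ((t 0 : ℝ) + (t 1 : ℝ) + (t 2 : ℝ)) * (mlt (d+1) t * pw b t) := by rw [h3]
            _ = _ := by ring
      _ = ((d:ℝ)+1) * b 0 * 1 + ((d:ℝ)+1) * b 1 * 1 + ((d:ℝ)+1) * b 2 * 1 := by
          rw [Finset.sum_add_distrib, Finset.sum_add_distrib, h0, h1, h2, ih]
      _ = ((d:ℝ)+1) * 1 := by linear_combination ((d:ℝ)+1) * hb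

lemma M1 (b : Fin 3 → ℝ) (hb : b 0 + b 1 + b 2 = 1) (d : ℕ) (m : Fin 3) :
    ∑ t ∈ Finset.Nat.antidiagonalTuple 3 d, (t m : ℝ) * mlt d t * pw b t = (d:ℝ) * b m := by
  cases d with
  | zero => simp [Finset.Nat.antidiagonalTuple_zero_right]
  | succ d =>
    have h := shift b d m (fun _ => 1)
    simp only [mul_one] at h
    rw [h, M0 b hb d]
    push_cast
    ring

lemma M2 (b : Fin 3 → ℝ) (hb : b 0 + b 1 + b 2 = 1) (d : ℕ) (m n : Fin 3) :
    ∑ t ∈ Finset.Nat.antidiagonalTuple 3 d, (t m : ℝ) * (t n : ℝ) * mlt d t * pw b t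
      = (d:ℝ) * b m * (((d:ℝ)-1) * b n + if n = m then 1 else 0) := by
  cases d with
  | zero => simp [Finset.Nat.antidiagonalTuple_zero_right]
  | succ d =>
    have h := shift b d m (fun t => (t n : ℝ))
    have hL : ∑ t ∈ Finset.Nat.antidiagonalTuple 3 (d+1), (t m : ℝ) * (t n : ℝ) * mlt (d+1) t * pw b t
        = ∑ t ∈ Finset.Nat.antidiagonalTuple 3 (d+1), (t m : ℝ) * mlt (d+1) t * pw b t * (t n : ℝ) := by
      apply Finset.sum_congr rfl; intro t _; ring
    have hupd : ∀ s : Fin 3 → ℕ, ((Function.update s m (s m + 1)) n : ℝ)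
        = (s n : ℝ) + (if n = m then 1 else 0) := by
      intro s
      by_cases hnm : n = m
      · subst hnm; simp
      · simp [Function.update_of_ne hnm, hnm]
    have hR : ∑ s ∈ Finset.Nat.antidiagonalTuple 3 d,
          mlt d s * pw b s * ((Function.update s m (s m + 1)) n : ℝ)
        = (d:ℝ) * b n + (if n = m then 1 else 0) := by
      calc ∑ s ∈ Finset.Nat.antidiagonalTuple 3 d,
            mlt d s * pw b s * ((Function.update s m (s m + 1)) n : ℝ)
          = ∑ s ∈ Finset.Nat.antidiagonalTuple 3 d,
            ((s n : ℝ) * mlt d s * pw b s + (if n = m then 1 else 0) * (mlt d s * pw b s)) := by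
            apply Finset.sum_congr rfl; intro s _; rw [hupd s]; ring
        _ = (d:ℝ) * b n + (if n = m then 1 else 0) := by
            rw [Finset.sum_add_distrib, M1 b hb d n, ← Finset.mul_sum, M0 b hb d, mul_one]
    rw [hL, h, hR]
    push_cast
    ring

lemma l1_le_sqrt2_norm (x : E2) : |x 0| + |x 1| ≤ Real.sqrt 2 * ‖x‖ := by
  have hn : ‖x‖ ^ 2 = x 0 ^ 2 + x 1 ^ 2 := by
    rw [EuclideanSpace.norm_eq]
    rw [Real.sq_sqrt (by positivity)]
    simp [Fin.sum_univ_two, sq_abs]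
  have hsq : (|x 0| + |x 1|) ^ 2 ≤ (Real.sqrt 2 * ‖x‖) ^ 2 := by
    rw [mul_pow, Real.sq_sqrt (by norm_num : (2:ℝ) ≥ 0), hn]
    nlinarith [sq_nonneg (|x 0| - |x 1|), sq_abs (x 0), sq_abs (x 1)]
  have h1 : (0:ℝ) ≤ |x 0| + |x 1| := by positivity
  have h2 : (0:ℝ) ≤ Real.sqrt 2 * ‖x‖ := by positivity
  nlinarith

lemma d2_bound (F : E2 → ℝ) (M : ℝ) (u : E2)
    (h : ∀ p q : Fin 2, |iteratedFDeriv ℝ 2 F u ![EuclideanSpace.single p (1:ℝ),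
        EuclideanSpace.single q (1:ℝ)]| ≤ M) :
    ‖fderiv ℝ (fderiv ℝ F) u‖ ≤ 2 * M := by
  have hM0 : 0 ≤ M := le_trans (abs_nonneg _) (h 0 0)
  set A := fderiv ℝ (fderiv ℝ F) u with hA
  have hPQ : ∀ p q : Fin 2, |A (EuclideanSpace.single p (1:ℝ)) (EuclideanSpace.single q (1:ℝ))| ≤ M := by
    intro p q
    have := h p q
    rwa [iteratedFDeriv_two_apply] at this
  have hdecomp : ∀ x : E2, x = ∑ p : Fin 2, x p • EuclideanSpace.single p (1:ℝ) := by
    intro x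
    have := (EuclideanSpace.basisFun (Fin 2) ℝ).sum_repr x
    simp only [EuclideanSpace.basisFun_repr, EuclideanSpace.basisFun_apply] at this
    exact this.symm
  have key : ∀ x y : E2, A x y = ∑ p : Fin 2, ∑ q : Fin 2,
      x p * y q * A (EuclideanSpace.single p (1:ℝ)) (EuclideanSpace.single q (1:ℝ)) := by
    intro x y
    conv_lhs => rw [hdecomp x, hdecomp y]
    simp only [map_sum, map_smul, ContinuousLinearMap.sum_apply,
      ContinuousLinearMap.smul_apply, smul_eq_mul, Finset.mul_sum, Finset.sum_mul]
    rw [Finset.sum_comm]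
    apply Finset.sum_congr rfl
    intro p _
    apply Finset.sum_congr rfl
    intro q _
    ring
  apply ContinuousLinearMap.opNorm_le_bound _ (by positivity)
  intro x
  apply ContinuousLinearMap.opNorm_le_bound _ (by positivity)
  intro y
  have hxy : |A x y| ≤ M * ((|x 0| + |x 1|) * (|y 0| + |y 1|)) := by
    rw [key x y]
    calc |∑ p : Fin 2, ∑ q : Fin 2, x p * y q * A (EuclideanSpace.single p (1:ℝ))
          (EuclideanSpace.single q (1:ℝ))|
        ≤ ∑ p : Fin 2, ∑ q : Fin 2, |x p| * |y q| * M := by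
          apply (Finset.abs_sum_le_sum_abs _ _).trans
          apply Finset.sum_le_sum
          intro p _
          apply (Finset.abs_sum_le_sum_abs _ _).trans
          apply Finset.sum_le_sum
          intro q _
          rw [abs_mul, abs_mul]
          exact mul_le_mul_of_nonneg_left (hPQ p q) (by positivity)
      _ = M * ((|x 0| + |x 1|) * (|y 0| + |y 1|)) := by
          simp [Fin.sum_univ_two]
          ring
  calc ‖A x y‖ ≤ M * ((|x 0| + |x 1|) * (|y 0| + |y 1|)) := hxy
    _ ≤ M * ((Real.sqrt 2 * ‖x‖) * (Real.sqrt 2 * ‖y‖)) := by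
        apply mul_le_mul_of_nonneg_left _ hM0
        apply mul_le_mul (l1_le_sqrt2_norm x) (l1_le_sqrt2_norm y) (by positivity) (by positivity)
    _ = 2 * M * ‖x‖ * ‖y‖ := by
        rw [show (Real.sqrt 2 * ‖x‖) * (Real.sqrt 2 * ‖y‖)
            = (Real.sqrt 2 * Real.sqrt 2) * (‖x‖ * ‖y‖) by ring,
          Real.mul_self_sqrt (by norm_num)]
        ring

lemma taylor_bound (F : E2 → ℝ) (hF : ContDiff ℝ 2 F) (S : Set E2) (hS : Convex ℝ S)
    (M : ℝ) (hM0 : 0 ≤ M) (hD2 : ∀ u ∈ S, ‖fderiv ℝ (fderiv ℝ F) u‖ ≤ 2 * M)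
    (v ξ : E2) (hv : v ∈ S) (hξ : ξ ∈ S) :
    |F ξ - F v - fderiv ℝ F v (ξ - v)| ≤ M * ‖ξ - v‖ ^ 2 := by
  set h : E2 := ξ - v with hh
  have hdiff : Differentiable ℝ F := hF.differentiable two_ne_zero
  have hdF : ContDiff ℝ 1 (fderiv ℝ F) := hF.fderiv_right (le_refl 2)
  have hdFd : Differentiable ℝ (fderiv ℝ F) := hdF.differentiable one_ne_zero
  have hLip : ∀ u ∈ S, ‖fderiv ℝ F u - fderiv ℝ F v‖ ≤ 2 * M * ‖u - v‖ := by
    intro u hu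
    exact hS.norm_image_sub_le_of_norm_fderiv_le (fun x _ => hdFd x) hD2 hv hu
  set γ : ℝ → E2 := fun s => v + s • h with hγ
  have hγmem : ∀ s ∈ Set.Icc (0:ℝ) 1, γ s ∈ S := by
    intro s hs
    exact hS.add_smul_sub_mem hv hξ hs
  set c : ℝ := fderiv ℝ F v h with hc
  set φ : ℝ → ℝ := fun s => F (γ s) - s * c with hφdef
  set φ' : ℝ → ℝ := fun s => fderiv ℝ F (γ s) h - c with hφ'def
  have hφ : ∀ s : ℝ, HasDerivAt φ (φ' s) s := by
    intro s
    have hγd : HasDerivAt γ h s := by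
      simpa [hγ] using ((hasDerivAt_id s).smul_const h).const_add v
    have h1 : HasDerivAt (fun s => F (γ s)) (fderiv ℝ F (γ s) h) s :=
      (hdiff (γ s)).hasFDerivAt.comp_hasDerivAt s hγd
    exact h1.sub ((hasDerivAt_mul_const c))
  have hcont : Continuous φ' := by
    have h1 : Continuous fun s => fderiv ℝ F (γ s) :=
      (hF.continuous_fderiv two_ne_zero).comp (by fun_prop)
    exact (h1.clm_apply continuous_const).sub continuous_const
  have hint : F ξ - F v - c = ∫ s in (0:ℝ)..1, φ' s := by
    have := intervalIntegral.integral_eq_sub_of_hasDerivAt (f := φ) (f' := φ')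
      (fun s _ => hφ s) (hcont.intervalIntegrable 0 1)
    rw [this]
    simp only [hφdef, hγ]
    norm_num [hh]
    ring
  have hbound : |∫ s in (0:ℝ)..1, φ' s| ≤ |∫ s in (0:ℝ)..1, 2 * M * ‖h‖ ^ 2 * s| := by
    rw [← Real.norm_eq_abs]
    refine le_trans ?_ (le_abs_self _)
    apply intervalIntegral.norm_integral_le_of_norm_le zero_le_one
    · apply Filter.Eventually.of_forall
      intro s hs
      norm_num at hs
      have hs01 : s ∈ Set.Icc (0:ℝ) 1 := ⟨le_of_lt hs.1, hs.2⟩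
      have hmem := hγmem s hs01
      have h1 : ‖φ' s‖ ≤ ‖fderiv ℝ F (γ s) - fderiv ℝ F v‖ * ‖h‖ := by
        have : φ' s = (fderiv ℝ F (γ s) - fderiv ℝ F v) h := by
          simp [hφ'def, hc, ContinuousLinearMap.sub_apply]
        rw [this]
        exact (fderiv ℝ F (γ s) - fderiv ℝ F v).le_opNorm h
      have h2 : ‖fderiv ℝ F (γ s) - fderiv ℝ F v‖ ≤ 2 * M * (s * ‖h‖) := by
        have := hLip (γ s) hmem
        have hγv : γ s - v = s • h := by simp [hγ]
        rw [hγv, norm_smul, Real.norm_eq_abs, abs_of_pos hs.1] at this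
        exact this
      calc ‖φ' s‖ ≤ ‖fderiv ℝ F (γ s) - fderiv ℝ F v‖ * ‖h‖ := h1
        _ ≤ (2 * M * (s * ‖h‖)) * ‖h‖ :=
            mul_le_mul_of_nonneg_right h2 (norm_nonneg _)
        _ = 2 * M * ‖h‖ ^ 2 * s := by ring
    · apply Continuous.intervalIntegrable
      fun_prop
  have hval : ∫ s in (0:ℝ)..1, 2 * M * ‖h‖ ^ 2 * s = M * ‖h‖ ^ 2 := by
    rw [intervalIntegral.integral_const_mul, integral_id]
    ring
  calc (|F ξ - F v - fderiv ℝ F v (ξ - v)|) = |∫ s in (0:ℝ)..1, φ' s| := by rw [← hint]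
    _ ≤ |∫ s in (0:ℝ)..1, 2 * M * ‖h‖ ^ 2 * s| := hbound
    _ = M * ‖h‖ ^ 2 := by rw [hval]; exact abs_of_nonneg (by positivity)

lemma cov (b : Fin 3 → ℝ) (hb : b 0 + b 1 + b 2 = 1) (d : ℕ) (hd : 1 ≤ d) (m n : Fin 3) :
    ∑ t ∈ Finset.Nat.antidiagonalTuple 3 d,
        mlt d t * pw b t * ((t m : ℝ)/(d:ℝ) - b m) * ((t n : ℝ)/(d:ℝ) - b n)
      = ((if n = m then b m else 0) - b m * b n)/(d:ℝ) := by
  have hd0 : (d:ℝ) ≠ 0 := by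
    have : 0 < d := hd
    positivity
  calc ∑ t ∈ Finset.Nat.antidiagonalTuple 3 d,
        mlt d t * pw b t * ((t m : ℝ)/(d:ℝ) - b m) * ((t n : ℝ)/(d:ℝ) - b n)
      = ∑ t ∈ Finset.Nat.antidiagonalTuple 3 d,
          ((1/(d:ℝ)^2) * ((t m : ℝ) * (t n : ℝ) * mlt d t * pw b t)
            - (b n/(d:ℝ)) * ((t m : ℝ) * mlt d t * pw b t)
            - (b m/(d:ℝ)) * ((t n : ℝ) * mlt d t * pw b t)
            + (b m * b n) * (mlt d t * pw b t)) := by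
        apply Finset.sum_congr rfl
        intro t _
        field_simp
        ring
    _ = (1/(d:ℝ)^2) * ∑ t ∈ Finset.Nat.antidiagonalTuple 3 d,
            (t m : ℝ) * (t n : ℝ) * mlt d t * pw b t
          - (b n/(d:ℝ)) * ∑ t ∈ Finset.Nat.antidiagonalTuple 3 d, (t m : ℝ) * mlt d t * pw b t
          - (b m/(d:ℝ)) * ∑ t ∈ Finset.Nat.antidiagonalTuple 3 d, (t n : ℝ) * mlt d t * pw b t
          + (b m * b n) * ∑ t ∈ Finset.Nat.antidiagonalTuple 3 d, mlt d t * pw b t := by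
        rw [Finset.sum_add_distrib, Finset.sum_sub_distrib, Finset.sum_sub_distrib,
          ← Finset.mul_sum, ← Finset.mul_sum, ← Finset.mul_sum, ← Finset.mul_sum]
    _ = ((if n = m then b m else 0) - b m * b n)/(d:ℝ) := by
        rw [M2 b hb d m n, M1 b hb d m, M1 b hb d n, M0 b hb d]
        by_cases hnm : n = m <;> simp only [hnm, if_true, if_false] <;> field_simp <;> ring

lemma inner_expand (a b c : ℝ) (p q r : E2) :
    ‖a • p + b • q + c • r‖^2
      = a*a*⟪p,p⟫ + a*b*⟪p,q⟫ + a*c*⟪p,r⟫ + b*a*⟪q,p⟫ + b*b*⟪q,q⟫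
        + b*c*⟪q,r⟫ + c*a*⟪r,p⟫ + c*b*⟪r,q⟫ + c*c*⟪r,r⟫ := by
  rw [← real_inner_self_eq_norm_sq]
  simp only [inner_add_left, inner_add_right, real_inner_smul_left, real_inner_smul_right]
  ring

set_option maxHeartbeats 2000000

/-- **Bernstein–Bézier approximation error bound.** For a twice continuously
differentiable `F` on a triangle `T`, the Bernstein operator
`B_d(F) = ∑_{ξ ∈ D_{d,T}} F(ξ) B_ξ` satisfies `‖F − B_d(F)‖_{∞,T} ≤ (|T|²/d) |F|_{2,T}`,
where `|T|` is the diameter (longest edge length) of `T` and `|F|_{2,T}` bounds the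
second-order partial derivatives of `F` on `T`. -/
theorem stmt_11 (v1 v2 v3 : E2) (hnd : AffineIndependent ℝ ![v1, v2, v3])
    (b1 b2 b3 : E2 → ℝ) (hb : IsBary v1 v2 v3 b1 b2 b3)
    (d : ℕ) (hd : 1 ≤ d)
    (F : E2 → ℝ) (hF : ContDiff ℝ 2 F)
    (Msem : ℝ)
    (hM : ∀ v ∈ convexHull ℝ ({v1, v2, v3} : Set E2), ∀ p q : Fin 2,
      |iteratedFDeriv ℝ 2 F v ![EuclideanSpace.single p (1 : ℝ),
          EuclideanSpace.single q (1 : ℝ)]| ≤ Msem)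
    (v : E2) (hv : v ∈ convexHull ℝ ({v1, v2, v3} : Set E2)) :
    |F v - ∑ t ∈ Finset.Nat.antidiagonalTuple 3 d,
        F ((d : ℝ)⁻¹ • ((t 0 : ℝ) • v1 + (t 1 : ℝ) • v2 + (t 2 : ℝ) • v3)) *
          bern b1 b2 b3 d (t 0) (t 1) (t 2) v|
      ≤ (Metric.diam (convexHull ℝ ({v1, v2, v3} : Set E2))) ^ 2 / d * Msem := by
  classical
  have hd0 : (0:ℝ) < (d:ℝ) := by exact_mod_cast hd
  have hdne : (d:ℝ) ≠ 0 := ne_of_gt hd0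
  set S : Set E2 := convexHull ℝ ({v1, v2, v3} : Set E2) with hSdef
  set D : ℝ := Metric.diam S with hDdef
  have hb1 : b1 v + b2 v + b3 v = 1 := (hb v).1
  have hbv : v = b1 v • v1 + b2 v • v2 + b3 v • v3 := (hb v).2
  set B : Fin 3 → ℝ := ![b1 v, b2 v, b3 v] with hBdef
  have hB0 : B 0 = b1 v := rfl
  have hB1 : B 1 = b2 v := rfl
  have hB2 : B 2 = b3 v := rfl
  have hBsum : B 0 + B 1 + B 2 = 1 := by rw [hB0, hB1, hB2]; exact hb1
  have hbv' : v = B 0 • v1 + B 1 • v2 + B 2 • v3 := by rw [hB0, hB1, hB2]; exact hbv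
  -- nonnegativity of barycentric coordinates
  have hinj : Function.Injective ![v1, v2, v3] := hnd.injective
  have hne12 : v1 ≠ v2 := fun h => absurd
    (hinj (show ![v1,v2,v3] 0 = ![v1,v2,v3] 1 by simpa using h)) (by decide)
  have hne13 : v1 ≠ v3 := fun h => absurd
    (hinj (show ![v1,v2,v3] 0 = ![v1,v2,v3] 2 by simpa using h)) (by decide)
  have hne23 : v2 ≠ v3 := fun h => absurd
    (hinj (show ![v1,v2,v3] 1 = ![v1,v2,v3] 2 by simpa using h)) (by decide)
  have hBnn : ∀ m : Fin 3, 0 ≤ B m := by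
    have hv' : v ∈ convexHull ℝ (↑({v1, v2, v3} : Finset E2) : Set E2) := by
      have : (↑({v1, v2, v3} : Finset E2) : Set E2) = ({v1, v2, v3} : Set E2) := by simp
      rw [this]; exact hv
    obtain ⟨w, hw0, hw1, hwv⟩ := Finset.mem_convexHull'.1 hv'
    have hss : ({v1, v2, v3} : Finset E2) = insert v1 (insert v2 ({v3} : Finset E2)) := rfl
    have hni1 : v1 ∉ insert v2 ({v3} : Finset E2) := by simp [hne12, hne13]
    have hni2 : v2 ∉ ({v3} : Finset E2) := by simp [hne23]
    rw [hss, Finset.sum_insert hni1, Finset.sum_insert hni2, Finset.sum_singleton] at hw1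
    rw [hss, Finset.sum_insert hni1, Finset.sum_insert hni2, Finset.sum_singleton] at hwv
    set c : Fin 3 → ℝ := ![w v1, w v2, w v3] with hcdef
    have hkey : ∀ m ∈ Finset.univ, c m - B m = 0 := by
      apply affineIndependent_iff.1 hnd Finset.univ (fun i => c i - B i)
      · rw [Fin.sum_univ_three]
        show (c 0 - B 0) + (c 1 - B 1) + (c 2 - B 2) = 0
        have hc0 : c 0 = w v1 := rfl
        have hc1 : c 1 = w v2 := rfl
        have hc2 : c 2 = w v3 := rfl
        rw [hc0, hc1, hc2]; linarith [hBsum, hw1]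
      · rw [Fin.sum_univ_three]
        show (c 0 - B 0) • (![v1,v2,v3] 0) + (c 1 - B 1) • (![v1,v2,v3] 1)
            + (c 2 - B 2) • (![v1,v2,v3] 2) = 0
        simp only [Matrix.cons_val_zero, Matrix.cons_val_one, Matrix.head_cons,
          Matrix.cons_val_two, Matrix.tail_cons]
        rw [sub_smul, sub_smul, sub_smul]
        have hc0 : c 0 = w v1 := rfl
        have hc1 : c 1 = w v2 := rfl
        have hc2 : c 2 = w v3 := rfl
        rw [hc0, hc1, hc2]
        have heq : (w v1 • v1 - B 0 • v1) + (w v2 • v2 - B 1 • v2) + (w v3 • v3 - B 2 • v3)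
            = (w v1 • v1 + (w v2 • v2 + w v3 • v3)) - (B 0 • v1 + B 1 • v2 + B 2 • v3) := by
          abel
        rw [heq, hwv, ← hbv', sub_self]
    intro m
    have := hkey m (Finset.mem_univ m)
    have hcm : 0 ≤ c m := by
      fin_cases m
      · exact hw0 v1 (by simp)
      · exact hw0 v2 (by simp)
      · exact hw0 v3 (by simp)
    linarith
  -- hull facts
  have hmemV : ∀ m : Fin 3, ![v1,v2,v3] m ∈ S := by
    intro m
    apply subset_convexHull ℝ ({v1, v2, v3} : Set E2)
    fin_cases m <;> simp
  have hhull : ∀ c : Fin 3 → ℝ, (∀ m, 0 ≤ c m) → c 0 + c 1 + c 2 = 1 →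
      c 0 • v1 + c 1 • v2 + c 2 • v3 ∈ S := by
    intro c hc0 hc1
    have hmem := Finset.centerMass_mem_convexHull (Finset.univ : Finset (Fin 3))
      (w := c) (z := ![v1,v2,v3]) (s := ({v1, v2, v3} : Set E2)) (fun i _ => hc0 i)
      (by rw [Fin.sum_univ_three, hc1]; norm_num)
      (fun i _ => by fin_cases i <;> simp)
    have : Finset.univ.centerMass c ![v1,v2,v3] = c 0 • v1 + c 1 • v2 + c 2 • v3 := by
      rw [Finset.centerMass, Fin.sum_univ_three, Fin.sum_univ_three, hc1, inv_one, one_smul]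
      simp
    rwa [this] at hmem
  have hbdd : Bornology.IsBounded S := by
    have hfin : ({v1, v2, v3} : Set E2).Finite :=
      (Set.finite_singleton v3).insert v2 |>.insert v1
    exact (hfin.isCompact_convexHull (𝕜 := ℝ)).isBounded
  have hDd : ∀ x ∈ S, ∀ y ∈ S, ‖x - y‖ ≤ D := by
    intro x hx y hy
    rw [← dist_eq_norm]
    exact Metric.dist_le_diam_of_mem hbdd hx hy
  have hMs0 : 0 ≤ Msem := le_trans (abs_nonneg _) (hM v hv 0 0)
  have hD2 : ∀ u ∈ S, ‖fderiv ℝ (fderiv ℝ F) u‖ ≤ 2 * Msem := fun u hu =>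
    d2_bound F Msem u (hM u hu)
  -- the Bernstein weights and nodes
  set P : (Fin 3 → ℕ) → ℝ := fun t => mlt d t * pw B t with hPdef
  set Ξ : (Fin 3 → ℕ) → E2 := fun t => ((t 0 : ℝ)/(d:ℝ)) • v1 + ((t 1 : ℝ)/(d:ℝ)) • v2
      + ((t 2 : ℝ)/(d:ℝ)) • v3 with hΞdef
  have hgoal : ∑ t ∈ Finset.Nat.antidiagonalTuple 3 d,
      F ((d : ℝ)⁻¹ • ((t 0 : ℝ) • v1 + (t 1 : ℝ) • v2 + (t 2 : ℝ) • v3)) *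
        bern b1 b2 b3 d (t 0) (t 1) (t 2) v
      = ∑ t ∈ Finset.Nat.antidiagonalTuple 3 d, F (Ξ t) * P t := by
    apply Finset.sum_congr rfl
    intro t _
    congr 1
    · congr 1
      rw [hΞdef]
      simp only [smul_add, smul_smul]
      rw [div_eq_inv_mul, div_eq_inv_mul, div_eq_inv_mul]
    · show bern b1 b2 b3 d (t 0) (t 1) (t 2) v = mlt d t * pw B t
      rw [bern, mlt, pw, hB0, hB1, hB2]
      ring
  rw [hgoal]
  -- basic sum facts
  have hP1 : ∑ t ∈ Finset.Nat.antidiagonalTuple 3 d, P t = 1 := M0 B hBsum d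
  have hPnn : ∀ t : Fin 3 → ℕ, 0 ≤ P t := by
    intro t
    apply mul_nonneg
    · rw [mlt]; positivity
    · rw [pw]
      have h0 := hBnn 0; have h1 := hBnn 1; have h2 := hBnn 2
      positivity
  have hΞS : ∀ t ∈ Finset.Nat.antidiagonalTuple 3 d, Ξ t ∈ S := by
    intro t ht
    apply hhull (fun m => (t m : ℝ)/(d:ℝ)) (fun m => by positivity)
    have h3 := sum3_of_mem ht
    field_simp
    exact_mod_cast h3
  have hmom : ∀ m : Fin 3, ∑ t ∈ Finset.Nat.antidiagonalTuple 3 d,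
      P t * ((t m : ℝ)/(d:ℝ)) = B m := by
    intro m
    have h1 := M1 B hBsum d m
    calc ∑ t ∈ Finset.Nat.antidiagonalTuple 3 d, P t * ((t m : ℝ)/(d:ℝ))
        = (1/(d:ℝ)) * ∑ t ∈ Finset.Nat.antidiagonalTuple 3 d, (t m : ℝ) * mlt d t * pw B t := by
          rw [Finset.mul_sum]
          apply Finset.sum_congr rfl
          intro t _
          rw [hPdef]
          ring
      _ = B m := by rw [h1]; field_simp
  have hlin : ∑ t ∈ Finset.Nat.antidiagonalTuple 3 d, P t • (Ξ t - v) = (0 : E2) := by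
    have hsplit : ∀ t : Fin 3 → ℕ, P t • (Ξ t - v)
        = (P t * ((t 0 : ℝ)/(d:ℝ))) • v1 + (P t * ((t 1 : ℝ)/(d:ℝ))) • v2
          + (P t * ((t 2 : ℝ)/(d:ℝ))) • v3 - P t • v := by
      intro t
      rw [hΞdef]
      simp only [smul_sub, smul_add, smul_smul]
    calc ∑ t ∈ Finset.Nat.antidiagonalTuple 3 d, P t • (Ξ t - v)
        = (∑ t ∈ Finset.Nat.antidiagonalTuple 3 d, P t * ((t 0 : ℝ)/(d:ℝ))) • v1
          + (∑ t ∈ Finset.Nat.antidiagonalTuple 3 d, P t * ((t 1 : ℝ)/(d:ℝ))) • v2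
          + (∑ t ∈ Finset.Nat.antidiagonalTuple 3 d, P t * ((t 2 : ℝ)/(d:ℝ))) • v3
          - (∑ t ∈ Finset.Nat.antidiagonalTuple 3 d, P t) • v := by
          rw [Finset.sum_congr rfl (fun t _ => hsplit t), Finset.sum_sub_distrib,
            Finset.sum_add_distrib, Finset.sum_add_distrib,
            Finset.sum_smul, Finset.sum_smul, Finset.sum_smul, Finset.sum_smul]
      _ = (0 : E2) := by
          rw [hmom 0, hmom 1, hmom 2, hP1, one_smul, ← hbv', sub_self]
  -- difference representation
  have hdiff3 : ∀ t ∈ Finset.Nat.antidiagonalTuple 3 d, Ξ t - v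
      = ((t 0 : ℝ)/(d:ℝ) - B 0) • (v1 - v) + ((t 1 : ℝ)/(d:ℝ) - B 1) • (v2 - v)
        + ((t 2 : ℝ)/(d:ℝ) - B 2) • (v3 - v) := by
    intro t ht
    have h3 := sum3_of_mem ht
    have hsum : (t 0 : ℝ)/(d:ℝ) + (t 1 : ℝ)/(d:ℝ) + (t 2 : ℝ)/(d:ℝ) = 1 := by
      field_simp
      exact_mod_cast h3
    have hδ : ((t 0 : ℝ)/(d:ℝ) - B 0) + ((t 1 : ℝ)/(d:ℝ) - B 1) + ((t 2 : ℝ)/(d:ℝ) - B 2) = 0 := by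
      linarith [hsum, hBsum]
    symm
    calc ((t 0 : ℝ)/(d:ℝ) - B 0) • (v1 - v) + ((t 1 : ℝ)/(d:ℝ) - B 1) • (v2 - v)
          + ((t 2 : ℝ)/(d:ℝ) - B 2) • (v3 - v)
        = (((t 0 : ℝ)/(d:ℝ) - B 0) • v1 + ((t 1 : ℝ)/(d:ℝ) - B 1) • v2
            + ((t 2 : ℝ)/(d:ℝ) - B 2) • v3)
          - ((((t 0 : ℝ)/(d:ℝ) - B 0) + ((t 1 : ℝ)/(d:ℝ) - B 1)
              + ((t 2 : ℝ)/(d:ℝ) - B 2)) • v) := by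
          rw [add_smul, add_smul]
          simp only [smul_sub]
          abel
      _ = ((t 0 : ℝ)/(d:ℝ) - B 0) • v1 + ((t 1 : ℝ)/(d:ℝ) - B 1) • v2
            + ((t 2 : ℝ)/(d:ℝ) - B 2) • v3 := by
          rw [hδ, zero_smul, sub_zero]
      _ = Ξ t - v := by
          conv_rhs => rw [hbv', hΞdef]
          rw [sub_smul, sub_smul, sub_smul]
          module
  -- the nine-term zero identity
  have hz : B 0 • (v1 - v) + B 1 • (v2 - v) + B 2 • (v3 - v) = (0 : E2) := by
    calc B 0 • (v1 - v) + B 1 • (v2 - v) + B 2 • (v3 - v)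
        = (B 0 • v1 + B 1 • v2 + B 2 • v3) - (B 0 + B 1 + B 2) • v := by
          rw [add_smul, add_smul]
          simp only [smul_sub]
          abel
      _ = v - (1:ℝ) • v := by rw [hBsum, ← hbv']
      _ = 0 := by rw [one_smul, sub_self]
  have hzero9 : B 0*B 0*⟪v1-v,v1-v⟫ + B 0*B 1*⟪v1-v,v2-v⟫ + B 0*B 2*⟪v1-v,v3-v⟫
      + B 1*B 0*⟪v2-v,v1-v⟫ + B 1*B 1*⟪v2-v,v2-v⟫ + B 1*B 2*⟪v2-v,v3-v⟫
      + B 2*B 0*⟪v3-v,v1-v⟫ + B 2*B 1*⟪v3-v,v2-v⟫ + B 2*B 2*⟪v3-v,v3-v⟫ = 0 := by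
    have h9 := inner_expand (B 0) (B 1) (B 2) (v1 - v) (v2 - v) (v3 - v)
    rw [hz] at h9
    rw [← h9]
    simp
  -- covariance sums
  have hcov : ∀ m n : Fin 3, ∑ t ∈ Finset.Nat.antidiagonalTuple 3 d,
      mlt d t * pw B t * ((t m : ℝ)/(d:ℝ) - B m) * ((t n : ℝ)/(d:ℝ) - B n)
        = ((if n = m then B m else 0) - B m * B n)/(d:ℝ) := fun m n => cov B hBsum d hd m n
  have hvar_eq : ∑ t ∈ Finset.Nat.antidiagonalTuple 3 d, P t * ‖Ξ t - v‖^2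
      = (1/(d:ℝ)) * (B 0 * ‖v1 - v‖^2 + B 1 * ‖v2 - v‖^2 + B 2 * ‖v3 - v‖^2) := by
    have hpt : ∀ t ∈ Finset.Nat.antidiagonalTuple 3 d, P t * ‖Ξ t - v‖^2
        = mlt d t * pw B t * ((t 0 : ℝ)/(d:ℝ) - B 0) * ((t 0 : ℝ)/(d:ℝ) - B 0) * ⟪v1-v,v1-v⟫
        + mlt d t * pw B t * ((t 0 : ℝ)/(d:ℝ) - B 0) * ((t 1 : ℝ)/(d:ℝ) - B 1) * ⟪v1-v,v2-v⟫
        + mlt d t * pw B t * ((t 0 : ℝ)/(d:ℝ) - B 0) * ((t 2 : ℝ)/(d:ℝ) - B 2) * ⟪v1-v,v3-v⟫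
        + mlt d t * pw B t * ((t 1 : ℝ)/(d:ℝ) - B 1) * ((t 0 : ℝ)/(d:ℝ) - B 0) * ⟪v2-v,v1-v⟫
        + mlt d t * pw B t * ((t 1 : ℝ)/(d:ℝ) - B 1) * ((t 1 : ℝ)/(d:ℝ) - B 1) * ⟪v2-v,v2-v⟫
        + mlt d t * pw B t * ((t 1 : ℝ)/(d:ℝ) - B 1) * ((t 2 : ℝ)/(d:ℝ) - B 2) * ⟪v2-v,v3-v⟫
        + mlt d t * pw B t * ((t 2 : ℝ)/(d:ℝ) - B 2) * ((t 0 : ℝ)/(d:ℝ) - B 0) * ⟪v3-v,v1-v⟫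
        + mlt d t * pw B t * ((t 2 : ℝ)/(d:ℝ) - B 2) * ((t 1 : ℝ)/(d:ℝ) - B 1) * ⟪v3-v,v2-v⟫
        + mlt d t * pw B t * ((t 2 : ℝ)/(d:ℝ) - B 2) * ((t 2 : ℝ)/(d:ℝ) - B 2) * ⟪v3-v,v3-v⟫ := by
      intro t ht
      rw [hdiff3 t ht, inner_expand, hPdef]
      ring
    have e00 : (if (0 : Fin 3) = 0 then B 0 else 0) = B 0 := if_pos rfl
    have e11 : (if (1 : Fin 3) = 1 then B 1 else 0) = B 1 := if_pos rfl
    have e22 : (if (2 : Fin 3) = 2 then B 2 else 0) = B 2 := if_pos rfl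
    have e10 : (if (1 : Fin 3) = 0 then B 0 else 0) = 0 := if_neg (by decide)
    have e20 : (if (2 : Fin 3) = 0 then B 0 else 0) = 0 := if_neg (by decide)
    have e01 : (if (0 : Fin 3) = 1 then B 1 else 0) = 0 := if_neg (by decide)
    have e21 : (if (2 : Fin 3) = 1 then B 1 else 0) = 0 := if_neg (by decide)
    have e02 : (if (0 : Fin 3) = 2 then B 2 else 0) = 0 := if_neg (by decide)
    have e12 : (if (1 : Fin 3) = 2 then B 2 else 0) = 0 := if_neg (by decide)
    calc ∑ t ∈ Finset.Nat.antidiagonalTuple 3 d, P t * ‖Ξ t - v‖^2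
        = (∑ t ∈ Finset.Nat.antidiagonalTuple 3 d,
              mlt d t * pw B t * ((t 0 : ℝ)/(d:ℝ) - B 0) * ((t 0 : ℝ)/(d:ℝ) - B 0)) * ⟪v1-v,v1-v⟫
          + (∑ t ∈ Finset.Nat.antidiagonalTuple 3 d,
              mlt d t * pw B t * ((t 0 : ℝ)/(d:ℝ) - B 0) * ((t 1 : ℝ)/(d:ℝ) - B 1)) * ⟪v1-v,v2-v⟫
          + (∑ t ∈ Finset.Nat.antidiagonalTuple 3 d,
              mlt d t * pw B t * ((t 0 : ℝ)/(d:ℝ) - B 0) * ((t 2 : ℝ)/(d:ℝ) - B 2)) * ⟪v1-v,v3-v⟫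
          + (∑ t ∈ Finset.Nat.antidiagonalTuple 3 d,
              mlt d t * pw B t * ((t 1 : ℝ)/(d:ℝ) - B 1) * ((t 0 : ℝ)/(d:ℝ) - B 0)) * ⟪v2-v,v1-v⟫
          + (∑ t ∈ Finset.Nat.antidiagonalTuple 3 d,
              mlt d t * pw B t * ((t 1 : ℝ)/(d:ℝ) - B 1) * ((t 1 : ℝ)/(d:ℝ) - B 1)) * ⟪v2-v,v2-v⟫
          + (∑ t ∈ Finset.Nat.antidiagonalTuple 3 d,
              mlt d t * pw B t * ((t 1 : ℝ)/(d:ℝ) - B 1) * ((t 2 : ℝ)/(d:ℝ) - B 2)) * ⟪v2-v,v3-v⟫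
          + (∑ t ∈ Finset.Nat.antidiagonalTuple 3 d,
              mlt d t * pw B t * ((t 2 : ℝ)/(d:ℝ) - B 2) * ((t 0 : ℝ)/(d:ℝ) - B 0)) * ⟪v3-v,v1-v⟫
          + (∑ t ∈ Finset.Nat.antidiagonalTuple 3 d,
              mlt d t * pw B t * ((t 2 : ℝ)/(d:ℝ) - B 2) * ((t 1 : ℝ)/(d:ℝ) - B 1)) * ⟪v3-v,v2-v⟫
          + (∑ t ∈ Finset.Nat.antidiagonalTuple 3 d,
              mlt d t * pw B t * ((t 2 : ℝ)/(d:ℝ) - B 2) * ((t 2 : ℝ)/(d:ℝ) - B 2)) * ⟪v3-v,v3-v⟫ := by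
          rw [Finset.sum_congr rfl hpt]
          simp only [Finset.sum_add_distrib, ← Finset.sum_mul]
      _ = (1/(d:ℝ)) * (B 0 * ‖v1 - v‖^2 + B 1 * ‖v2 - v‖^2 + B 2 * ‖v3 - v‖^2) := by
          rw [hcov 0 0, hcov 0 1, hcov 0 2, hcov 1 0, hcov 1 1, hcov 1 2,
            hcov 2 0, hcov 2 1, hcov 2 2]
          rw [e00, e11, e22, e10, e20, e01, e21, e02, e12]
          rw [show ⟪v1-v,v1-v⟫ = ‖v1 - v‖^2 from real_inner_self_eq_norm_sq _,
            show ⟪v2-v,v2-v⟫ = ‖v2 - v‖^2 from real_inner_self_eq_norm_sq _,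
            show ⟪v3-v,v3-v⟫ = ‖v3 - v‖^2 from real_inner_self_eq_norm_sq _] at hzero9 ⊢
          linear_combination (-(1:ℝ)/(d:ℝ)) * hzero9
  have hDnn : 0 ≤ D := Metric.diam_nonneg
  have hvar_le : ∑ t ∈ Finset.Nat.antidiagonalTuple 3 d, P t * ‖Ξ t - v‖^2 ≤ D^2/(d:ℝ) := by
    rw [hvar_eq]
    have hm1 : ‖v1 - v‖ ≤ D := hDd v1 (by simpa using hmemV 0) v hv
    have hm2 : ‖v2 - v‖ ≤ D := hDd v2 (by simpa using hmemV 1) v hv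
    have hm3 : ‖v3 - v‖ ≤ D := hDd v3 (by simpa using hmemV 2) v hv
    have hsq1 : ‖v1 - v‖^2 ≤ D^2 := pow_le_pow_left₀ (norm_nonneg _) hm1 2
    have hsq2 : ‖v2 - v‖^2 ≤ D^2 := pow_le_pow_left₀ (norm_nonneg _) hm2 2
    have hsq3 : ‖v3 - v‖^2 ≤ D^2 := pow_le_pow_left₀ (norm_nonneg _) hm3 2
    have hb0 := hBnn 0; have hb1' := hBnn 1; have hb2' := hBnn 2
    have hsum_le : B 0 * ‖v1 - v‖^2 + B 1 * ‖v2 - v‖^2 + B 2 * ‖v3 - v‖^2 ≤ D^2 := by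
      calc B 0 * ‖v1 - v‖^2 + B 1 * ‖v2 - v‖^2 + B 2 * ‖v3 - v‖^2
          ≤ B 0 * D^2 + B 1 * D^2 + B 2 * D^2 := by
            gcongr
        _ = D^2 := by rw [← add_mul, ← add_mul, hBsum, one_mul]
    calc (1/(d:ℝ)) * (B 0 * ‖v1 - v‖^2 + B 1 * ‖v2 - v‖^2 + B 2 * ‖v3 - v‖^2)
        ≤ (1/(d:ℝ)) * D^2 := by
          apply mul_le_mul_of_nonneg_left hsum_le
          positivity
      _ = D^2/(d:ℝ) := by ring
  -- Taylor estimate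
  have htay : ∀ t ∈ Finset.Nat.antidiagonalTuple 3 d,
      |F (Ξ t) - F v - fderiv ℝ F v (Ξ t - v)| ≤ Msem * ‖Ξ t - v‖^2 := fun t ht =>
    taylor_bound F hF S (convex_convexHull ℝ _) Msem hMs0 hD2 v (Ξ t) hv (hΞS t ht)
  -- assembling
  have hL : ∑ t ∈ Finset.Nat.antidiagonalTuple 3 d, P t * (fderiv ℝ F v) (Ξ t - v) = 0 := by
    have h1 : ∑ t ∈ Finset.Nat.antidiagonalTuple 3 d, P t * (fderiv ℝ F v) (Ξ t - v)
        = (fderiv ℝ F v) (∑ t ∈ Finset.Nat.antidiagonalTuple 3 d, P t • (Ξ t - v)) := by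
      rw [map_sum]
      apply Finset.sum_congr rfl
      intro t _
      rw [map_smul, smul_eq_mul]
    rw [h1, hlin, map_zero]
  have hFv : ∑ t ∈ Finset.Nat.antidiagonalTuple 3 d, P t * F v = F v := by
    rw [← Finset.sum_mul, hP1, one_mul]
  have hsplit2 : F v - ∑ t ∈ Finset.Nat.antidiagonalTuple 3 d, F (Ξ t) * P t
      = - ∑ t ∈ Finset.Nat.antidiagonalTuple 3 d,
          P t * (F (Ξ t) - F v - fderiv ℝ F v (Ξ t - v)) := by
    have hexp : ∑ t ∈ Finset.Nat.antidiagonalTuple 3 d, F (Ξ t) * P t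
        = ∑ t ∈ Finset.Nat.antidiagonalTuple 3 d,
            (P t * (F (Ξ t) - F v - fderiv ℝ F v (Ξ t - v))
              + P t * (fderiv ℝ F v) (Ξ t - v) + P t * F v) := by
      apply Finset.sum_congr rfl
      intro t _
      ring
    rw [hexp, Finset.sum_add_distrib, Finset.sum_add_distrib, hL, hFv]
    ring
  rw [hsplit2, abs_neg]
  calc |∑ t ∈ Finset.Nat.antidiagonalTuple 3 d,
        P t * (F (Ξ t) - F v - fderiv ℝ F v (Ξ t - v))|
      ≤ ∑ t ∈ Finset.Nat.antidiagonalTuple 3 d,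
          |P t * (F (Ξ t) - F v - fderiv ℝ F v (Ξ t - v))| :=
        Finset.abs_sum_le_sum_abs _ _
    _ ≤ ∑ t ∈ Finset.Nat.antidiagonalTuple 3 d, P t * (Msem * ‖Ξ t - v‖^2) := by
        apply Finset.sum_le_sum
        intro t ht
        rw [abs_mul, abs_of_nonneg (hPnn t)]
        exact mul_le_mul_of_nonneg_left (htay t ht) (hPnn t)
    _ = Msem * ∑ t ∈ Finset.Nat.antidiagonalTuple 3 d, P t * ‖Ξ t - v‖^2 := by
        rw [Finset.mul_sum]
        apply Finset.sum_congr rfl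
        intro t _
        ring
    _ ≤ Msem * (D^2/(d:ℝ)) := mul_le_mul_of_nonneg_left hvar_le hMs0
    _ = D^2/(d:ℝ) * Msem := mul_comm _ _
end
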